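/- arXiv:2001.00477 — 3 statements merged into one kernel-verified Lean document; each statement's English description precedes it below -/
import Mathlib

section
/- Every finite connected chordal graph has cop number 1. -/
open SimpleGraph

variable {V : Type*}

/-- The closed neighborhood `N[v]` of a vertex. -/
def closedNbhd (G : SimpleGraph V) (v : V) : Set V := insert v (G.neighborSet v)

/-- A legal move in the game: stay put or move along an edge. -/
def Step (G : SimpleGraph V) (u w : V) : Prop := u = w ∨ G.Adj u w

/-- A strategy for `k` cops: initial placement, and a move function (cops see all positions),
each cop staying or moving along an edge. -/
structure CopStrategy (G : SimpleGraph V) (k : ℕ) where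
  init : Fin k → V
  move : (Fin k → V) → V → (Fin k → V)
  move_valid : ∀ c r i, Step G (c i) (move c r i)

/-- A strategy for the robber: initial placement after seeing the cops, and a move
function (after seeing the cops' new positions), staying or moving along an edge. -/
structure RobberStrategy (G : SimpleGraph V) (k : ℕ) where
  init : (Fin k → V) → V
  move : (Fin k → V) → V → V
  move_valid : ∀ c r, Step G r (move c r)

/-- The state of the play after `n` full rounds: cops' positions and robber's position.
In each round the cops move first, then the robber moves. -/
def play {G : SimpleGraph V} {k : ℕ} (S : CopStrategy G k) (R : RobberStrategy G k) :
    ℕ → (Fin k → V) × V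
  | 0 => (S.init, R.init S.init)
  | n + 1 =>
    let p := play S R n
    let c' := S.move p.1 p.2
    (c', R.move c' p.2)

/-- The cops win with strategy `S` if against every robber strategy, at some cop move a cop
lands on the robber's current vertex. -/
def CopsWin {G : SimpleGraph V} {k : ℕ} (S : CopStrategy G k) : Prop :=
  ∀ R : RobberStrategy G k, ∃ n i,
    S.move (play S R n).1 (play S R n).2 i = (play S R n).2

/-- The cops capture the robber within `m` cop moves. -/
def CapturesWithin {G : SimpleGraph V} {k : ℕ} (S : CopStrategy G k) (m : ℕ) : Prop :=
  ∀ R : RobberStrategy G k, ∃ n, n + 1 ≤ m ∧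
    ∃ i, S.move (play S R n).1 (play S R n).2 i = (play S R n).2

/-- The cop number of `G`: the least `k` such that `k` cops have a winning strategy. -/
noncomputable def copNumber (G : SimpleGraph V) : ℕ :=
  sInf {k | ∃ S : CopStrategy G k, CopsWin S}

/-- A set `U` is Dilworth if for all distinct `u v ∈ U`, `N(u) \ N[v] ≠ ∅` and
`N(v) \ N[u] ≠ ∅`. -/
def IsDilworthSet (G : SimpleGraph V) (U : Finset V) : Prop :=
  ∀ u ∈ U, ∀ v ∈ U, u ≠ v →
    (G.neighborSet u \ closedNbhd G v).Nonempty ∧ (G.neighborSet v \ closedNbhd G u).Nonempty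

/-- The Dilworth number of `G`: the largest size of a Dilworth set. -/
noncomputable def dilworthNumber (G : SimpleGraph V) : ℕ :=
  sSup {n | ∃ U : Finset V, IsDilworthSet G U ∧ U.card = n}

/-- `zval G v`: the maximum number of vertices of an induced path of `G` with endpoint `v`. -/
noncomputable def zval (G : SimpleGraph V) (v : V) : ℕ :=
  sSup {n | ∃ f : pathGraph n ↪g G, ∃ h : 0 < n, f ⟨0, h⟩ = v}

/-- `zNum G = min over v of zval G v`. -/
noncomputable def zNum (G : SimpleGraph V) : ℕ :=
  sInf {n | ∃ v : V, zval G v = n}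

/-!
A chordal graph with an edge has a vertex `v` dominated by another vertex `u`, i.e.
`N[v] ⊆ N[u]`: the first vertex `p 0` of a longest induced path is dominated by `p 1`, since a
neighbour of `p 0` outside `N[p 1]` would either extend the path or, together with the path up to
its first neighbour `p i` with `i ≥ 2`, form an induced cycle of length at least four.

Deleting `v` leaves a connected chordal graph, on which one cop wins by induction. On `G` the cop
follows that strategy against the image of the robber under the retraction `v ↦ u`, which is a
walk of `G - v` because `N[v] ⊆ N[u]`. When the shadow robber is caught, the real robber stands
next to the cop, who captures him on the next move.
-/

theorem mem_closedNbhd {G : SimpleGraph V} {v w : V} :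
    w ∈ closedNbhd G v ↔ w = v ∨ G.Adj v w :=
  Iff.rfl

namespace SimpleGraph

variable {G : SimpleGraph V}

def IsChordal (G : SimpleGraph V) : Prop :=
  ∀ n, 4 ≤ n → IsEmpty (cycleGraph n ↪g G)

theorem IsChordal.induce (hG : G.IsChordal) (s : Set V) : (G.induce s).IsChordal :=
  fun n hn => ⟨fun f => (hG n hn).false (f.trans (Embedding.induce s))⟩

theorem cycleGraph_adj_iff_val {n : ℕ} {a b : Fin (n + 2)} :
    (cycleGraph (n + 2)).Adj a b ↔ a.val + 1 = b.val ∨ b.val + 1 = a.val ∨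
      (a.val = 0 ∧ b.val = n + 1) ∨ (b.val = 0 ∧ a.val = n + 1) := by
  rw [cycleGraph_adj']
  rcases lt_trichotomy a b with h | rfl | h
  · rw [Fin.coe_sub_iff_lt.mpr h, Fin.coe_sub_iff_le.mpr h.le]
    have := Fin.lt_def.mp h
    omega
  · simp only [sub_self, Fin.val_zero]
    omega
  · rw [Fin.coe_sub_iff_le.mpr h.le, Fin.coe_sub_iff_lt.mpr h]
    have := Fin.lt_def.mp h
    omega

def consSeq (w : V) (p : ℕ → V) : ℕ → V
  | 0 => w
  | n + 1 => p n

theorem injOn_consSeq {w : V} {p : ℕ → V} {k : ℕ} (hp : Set.InjOn p (Set.Iio k))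
    (hw : ∀ j < k, w ≠ p j) : Set.InjOn (consSeq w p) (Set.Iio (k + 1)) := by
  intro i hi j hj h
  simp only [Set.mem_Iio] at hi hj
  cases i <;> cases j <;> simp only [consSeq] at h
  · rfl
  · exact absurd h (hw _ (by omega))
  · exact absurd h.symm (hw _ (by omega))
  · rw [hp (Set.mem_Iio.2 (by omega)) (Set.mem_Iio.2 (by omega)) h]

/-- `p 0, …, p (k - 1)` are, in this order, the vertices of an induced path of `G`. -/
structure IsInducedPath (G : SimpleGraph V) (p : ℕ → V) (k : ℕ) : Prop where
  injOn : Set.InjOn p (Set.Iio k)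
  adj_iff : ∀ ⦃i j⦄, i < k → j < k → (G.Adj (p i) (p j) ↔ i + 1 = j ∨ j + 1 = i)

namespace IsInducedPath

variable {p : ℕ → V} {k : ℕ}

theorem mono (hp : G.IsInducedPath p k) {m : ℕ} (hm : m ≤ k) : G.IsInducedPath p m :=
  ⟨hp.injOn.mono fun _ hi => lt_of_lt_of_le hi hm,
    fun _ _ hi hj => hp.adj_iff (hi.trans_le hm) (hj.trans_le hm)⟩

theorem le_card [Finite V] (hp : G.IsInducedPath p k) : k ≤ Nat.card V := by
  have hinj : Function.Injective fun i : Fin k => p i :=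
    fun i j h => Fin.ext (hp.injOn i.isLt j.isLt h)
  simpa using Nat.card_le_card_of_injective _ hinj

theorem cons (hp : G.IsInducedPath p k) {w : V} (hw : ∀ j < k, w ≠ p j)
    (hadj : ∀ j < k, G.Adj w (p j) ↔ j = 0) : G.IsInducedPath (consSeq w p) (k + 1) := by
  refine ⟨injOn_consSeq hp.injOn hw, fun i j hi hj => ?_⟩
  cases i <;> cases j <;> simp only [consSeq]
  · simp
  · rw [hadj _ (by omega)]; omega
  · rw [G.adj_comm, hadj _ (by omega)]; omega
  · rw [hp.adj_iff (by omega) (by omega)]; omega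

end IsInducedPath

/-- `w, p 0, …, p k` would be an induced cycle of length `k + 2 ≥ 4`. -/
theorem IsChordal.false_of_isInducedPath (hG : G.IsChordal) {p : ℕ → V} {k : ℕ}
    (hp : G.IsInducedPath p (k + 1)) (hk : 2 ≤ k) {w : V} (hw : ∀ j < k + 1, w ≠ p j)
    (hadj : ∀ j < k + 1, G.Adj w (p j) ↔ j = 0 ∨ j = k) : False := by
  have hcycle : ∀ ⦃i j⦄, i < k + 2 → j < k + 2 →
      (G.Adj (consSeq w p i) (consSeq w p j) ↔
        i + 1 = j ∨ j + 1 = i ∨ (i = 0 ∧ j = k + 1) ∨ (j = 0 ∧ i = k + 1)) := by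
    intro i j hi hj
    cases i <;> cases j <;> simp only [consSeq, true_and]
    · simp
    · rw [hadj _ (by omega)]; omega
    · rw [G.adj_comm, hadj _ (by omega)]; omega
    · rw [hp.adj_iff (by omega) (by omega)]; omega
  have hinj : Function.Injective fun i : Fin (k + 2) => consSeq w p i :=
    fun i j h => Fin.ext (injOn_consSeq hp.injOn hw i.isLt j.isLt h)
  exact (hG (k + 2) (by omega)).false
    ⟨⟨_, hinj⟩, fun {i j} => by simpa [cycleGraph_adj_iff_val] using hcycle i.isLt j.isLt⟩

theorem isInducedPath_const (v : V) : G.IsInducedPath (fun _ => v) 1 :=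
  ⟨fun i hi j hj _ => by simp_all, fun i j hi hj => by simp only [G.irrefl, false_iff]; omega⟩

theorem exists_isInducedPath_maximal [Finite V] {p : ℕ → V} {k : ℕ}
    (hp : G.IsInducedPath p k) :
    ∃ q m, k ≤ m ∧ G.IsInducedPath q m ∧ ∀ q', ¬G.IsInducedPath q' (m + 1) := by
  classical
  let P m := ∃ q, G.IsInducedPath q m
  obtain ⟨q, hq⟩ : P (Nat.findGreatest P (Nat.card V)) :=
    Nat.findGreatest_spec hp.le_card ⟨p, hp⟩
  refine ⟨q, _, Nat.le_findGreatest hp.le_card ⟨p, hp⟩, hq, fun q' hq' => ?_⟩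
  exact Nat.findGreatest_is_greatest (Nat.lt_succ_self _) hq'.le_card ⟨q', hq'⟩

theorem IsChordal.closedNbhd_subset_of_isInducedPath (hG : G.IsChordal) {p : ℕ → V} {k : ℕ}
    (hp : G.IsInducedPath p k) (hk : 2 ≤ k) (hmax : ∀ q, ¬G.IsInducedPath q (k + 1)) :
    closedNbhd G (p 0) ⊆ closedNbhd G (p 1) := by
  have h01 : G.Adj (p 0) (p 1) := (hp.adj_iff (by omega) (by omega)).2 (Or.inl rfl)
  intro w hw
  rcases mem_closedNbhd.1 hw with rfl | hw
  · exact Or.inr h01.symm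
  by_contra hw1
  simp only [mem_closedNbhd, not_or] at hw1
  obtain ⟨hw1, hwa1⟩ := hw1
  have hne : ∀ j < k, w ≠ p j := by
    rintro j hj rfl
    rcases j with _ | _ | j
    · exact G.irrefl hw
    · exact hw1 rfl
    · exact absurd ((hp.adj_iff (by omega) hj).1 hw) (by omega)
  by_cases hex : ∃ i, 2 ≤ i ∧ i < k ∧ G.Adj w (p i)
  · classical
    obtain ⟨i, ⟨hi2, hik, hwi⟩, hmin⟩ : ∃ i, (2 ≤ i ∧ i < k ∧ G.Adj w (p i)) ∧
        ∀ j < i, ¬(2 ≤ j ∧ j < k ∧ G.Adj w (p j)) :=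
      ⟨Nat.find hex, Nat.find_spec hex, fun j => Nat.find_min hex⟩
    refine hG.false_of_isInducedPath (hp.mono (by omega : i + 1 ≤ k)) hi2
      (fun j hj => hne j (by omega)) fun j hj => ?_
    rcases j with _ | _ | j
    · simp [hw.symm]
    · simp only [G.adj_comm w, hwa1, false_iff]
      omega
    · constructor
      · intro h
        by_contra hji
        exact hmin (j + 2) (by omega) ⟨by omega, by omega, h⟩
      · rintro (h | h)
        · omega
        · rwa [h]
  · push Not at hex
    refine hmax _ (hp.cons hne fun j hj => ?_)
    rcases j with _ | _ | j
    · simp [hw.symm]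
    · simp [G.adj_comm w, hwa1]
    · simpa using hex _ (by omega) hj

theorem IsChordal.exists_closedNbhd_subset [Finite V] (hG : G.IsChordal) {a b : V}
    (hab : G.Adj a b) : ∃ u v, u ≠ v ∧ closedNbhd G v ⊆ closedNbhd G u := by
  have hp : G.IsInducedPath (consSeq a fun _ => b) 2 :=
    (isInducedPath_const b).cons (fun j hj => hab.ne) fun j hj => by simp [hab, (by omega : j = 0)]
  obtain ⟨q, m, hm, hq, hmax⟩ := exists_isInducedPath_maximal hp
  have h01 : G.Adj (q 0) (q 1) := (hq.adj_iff (by omega) (by omega)).2 (Or.inl rfl)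
  exact ⟨q 1, q 0, h01.ne', hG.closedNbhd_subset_of_isInducedPath hq hm hmax⟩

end SimpleGraph

section Step

variable {G : SimpleGraph V}

theorem Step.symm {a b : V} (h : Step G a b) : Step G b a :=
  h.elim (fun e => Or.inl e.symm) fun e => Or.inr e.symm

theorem Step.reachable {a b : V} (h : Step G a b) : G.Reachable a b :=
  h.elim (fun e => e ▸ Reachable.refl a) Adj.reachable

theorem step_induce_iff {s : Set V} {x y : s} : Step (G.induce s) x y ↔ Step G x y := by
  simp only [Step, Subtype.ext_iff, comap_adj, Function.Embedding.subtype_apply]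

theorem Step.of_closedNbhd_subset {u v w : V} (hdom : closedNbhd G v ⊆ closedNbhd G u)
    (h : Step G v w) : Step G u w := by
  rcases mem_closedNbhd.1 (hdom (h.elim (fun e => Or.inl e.symm) Or.inr)) with e | e
  · exact Or.inl e.symm
  · exact Or.inr e

section Retraction

variable {u v : V} (huv : u ≠ v)

open Classical in
noncomputable def retraction (w : V) : ({v}ᶜ : Set V) :=
  if h : w = v then ⟨u, huv⟩ else ⟨w, h⟩

theorem coe_retraction_self : (retraction huv v : V) = u := by
  simp [retraction]

theorem coe_retraction_of_ne {w : V} (h : w ≠ v) : (retraction huv w : V) = w := by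
  simp [retraction, h]

theorem retraction_coe (x : ({v}ᶜ : Set V)) : retraction huv x = x :=
  Subtype.ext (coe_retraction_of_ne huv x.2)

variable {huv}

theorem Step.coe_retraction (hdom : closedNbhd G v ⊆ closedNbhd G u) {a b : V}
    (h : Step G a b) : Step G (retraction huv a) b := by
  by_cases ha : a = v
  · subst ha
    rw [coe_retraction_self]
    exact h.of_closedNbhd_subset hdom
  · rwa [coe_retraction_of_ne huv ha]

theorem Step.retraction (hdom : closedNbhd G v ⊆ closedNbhd G u) {a b : V} (h : Step G a b) :
    Step (G.induce {v}ᶜ) (retraction huv a) (retraction huv b) :=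
  step_induce_iff.2 ((h.coe_retraction hdom).symm.coe_retraction hdom).symm

end Retraction

end Step

namespace SimpleGraph

variable {G : SimpleGraph V}

theorem Reachable.retraction {u v : V} {huv : u ≠ v} (hdom : closedNbhd G v ⊆ closedNbhd G u)
    {a b : V} (h : G.Reachable a b) :
    (G.induce {v}ᶜ).Reachable (retraction huv a) (retraction huv b) := by
  obtain ⟨p⟩ := h
  induction p with
  | nil => rfl
  | cons hadj _ ih => exact (Step.retraction hdom (Or.inr hadj)).reachable.trans ih

theorem Connected.induce_compl_singleton_of_closedNbhd_subset {u v : V} (hconn : G.Connected)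
    (huv : u ≠ v) (hdom : closedNbhd G v ⊆ closedNbhd G u) :
    (G.induce {v}ᶜ).Connected := by
  have : Nonempty ({v}ᶜ : Set V) := ⟨⟨u, huv⟩⟩
  refine ⟨fun x y => ?_⟩
  simpa only [retraction_coe] using (hconn.preconnected x y).retraction (huv := huv) hdom

end SimpleGraph

structure SingleCopStrategy (G : SimpleGraph V) where
  init : V
  move : V → V → V
  move_valid : ∀ c r, Step G c (move c r)

namespace SingleCopStrategy

variable {G : SimpleGraph V} (S : SingleCopStrategy G)

/-- `r m` is the robber's position when the cop makes his `(m + 1)`-st move. -/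
def pos (r : ℕ → V) : ℕ → V
  | 0 => S.init
  | n + 1 => S.move (pos r n) (r n)

def CatchesAllWalks : Prop :=
  ∀ r : ℕ → V, (∀ n, Step G (r n) (r (n + 1))) → ∃ n, S.pos r (n + 1) = r n

def toCopStrategy : CopStrategy G 1 where
  init _ := S.init
  move c r _ := S.move (c 0) r
  move_valid c r i := Fin.fin_one_eq_zero i ▸ S.move_valid (c 0) r

theorem CatchesAllWalks.copsWin {S : SingleCopStrategy G} (hS : S.CatchesAllWalks) :
    CopsWin S.toCopStrategy := by
  intro R
  let r n := (play S.toCopStrategy R n).2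
  have hpos : ∀ n, (play S.toCopStrategy R n).1 = fun _ => S.pos r n := by
    intro n
    induction n with
    | zero => rfl
    | succ n ih => exact congrArg (fun c _ => S.move (c 0) (r n)) ih
  obtain ⟨n, hn⟩ := hS r fun n => R.move_valid _ _
  exact ⟨n, 0, (congrArg (S.move · (r n)) (congrFun (hpos n) 0)).trans hn⟩

section Lift

variable {u v : V} (huv : u ≠ v)

open Classical in
noncomputable def lift (S : SingleCopStrategy (G.induce {v}ᶜ)) : SingleCopStrategy G where
  init := S.init
  move c r := if Step G c r then r else if c = v then c
    else S.move (retraction huv c) (retraction huv r)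
  move_valid c r := by
    split_ifs with hreach hcv
    · exact hreach
    · exact Or.inl rfl
    · simpa only [step_induce_iff, coe_retraction_of_ne huv hcv] using
        S.move_valid (retraction huv c) (retraction huv r)

open Classical in
theorem lift_move (S : SingleCopStrategy (G.induce {v}ᶜ)) (c r : V) :
    (S.lift huv).move c r = if Step G c r then r else if c = v then c
      else S.move (retraction huv c) (retraction huv r) := rfl

theorem CatchesAllWalks.lift (hdom : closedNbhd G v ⊆ closedNbhd G u)
    {S : SingleCopStrategy (G.induce {v}ᶜ)} (hS : S.CatchesAllWalks) :
    (S.lift huv).CatchesAllWalks := by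
  intro r hr
  by_cases hreach : ∃ n, Step G ((S.lift huv).pos r n) (r n)
  · obtain ⟨n, hn⟩ := hreach
    exact ⟨n, by rw [pos, lift_move, if_pos hn]⟩
  push Not at hreach
  have hshadow : ∀ n, (S.lift huv).pos r n = S.pos (retraction huv ∘ r) n := by
    intro n
    induction n with
    | zero => rfl
    | succ n ih =>
      have hcv : (S.lift huv).pos r n ≠ v := ih ▸ (S.pos _ n).2
      rw [pos, lift_move, if_neg (hreach n), if_neg hcv, ih, retraction_coe]
      rfl
  obtain ⟨n, hn⟩ := hS (retraction huv ∘ r) fun n => (hr n).retraction hdom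
  refine absurd ?_ (hreach (n + 1))
  rw [hshadow, hn]
  exact (hr n).coe_retraction hdom

end Lift

end SingleCopStrategy

theorem SimpleGraph.IsChordal.exists_catchesAllWalks [Finite V] {G : SimpleGraph V}
    (hG : G.IsChordal) (hconn : G.Connected) :
    ∃ S : SingleCopStrategy G, S.CatchesAllWalks := by
  induction V using Finite.induction_subsingleton_or_nontrivial with
  | hbase V =>
    exact ⟨⟨hconn.nonempty.some, fun _ r => r, fun _ _ => Or.inl (Subsingleton.elim _ _)⟩,
      fun _ _ => ⟨0, rfl⟩⟩
  | hstep V ih =>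
    obtain ⟨a, b, hab⟩ : ∃ a b, G.Adj a b :=
      ⟨_, hconn.preconnected.exists_adj_of_nontrivial hconn.nonempty.some⟩
    obtain ⟨u, v, huv, hdom⟩ := hG.exists_closedNbhd_subset hab
    obtain ⟨S, hS⟩ := ih ({v}ᶜ : Set V) (Finite.card_subtype_lt (x := v) (by simp))
      (hG.induce _) (hconn.induce_compl_singleton_of_closedNbhd_subset huv hdom)
    exact ⟨S.lift huv, hS.lift huv hdom⟩

theorem not_copsWin_zero [Nonempty V] {G : SimpleGraph V} (S : CopStrategy G 0) :
    ¬CopsWin S := fun hS =>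
  (hS ⟨fun _ => Classical.arbitrary V, fun _ r => r, fun _ _ => Or.inl rfl⟩).elim
    fun _ ⟨i, _⟩ => i.elim0

theorem copNumber_eq_one_of_copsWin [Nonempty V] {G : SimpleGraph V} {S : CopStrategy G 1}
    (hS : CopsWin S) : copNumber G = 1 := by
  refine le_antisymm (Nat.sInf_le ⟨S, hS⟩) (le_csInf ⟨1, S, hS⟩ fun k ⟨T, hT⟩ => ?_)
  rcases k with _ | k
  · exact absurd hT (not_copsWin_zero T)
  · omega

/-- Every finite connected chordal graph has cop number 1. -/
theorem copNumber_eq_one_of_chordal [Fintype V] (G : SimpleGraph V)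
    (hconn : G.Connected)
    (hchordal : ∀ n, 4 ≤ n → IsEmpty (cycleGraph n ↪g G)) :
    copNumber G = 1 := by
  have : Nonempty V := hconn.nonempty
  obtain ⟨S, hS⟩ := IsChordal.exists_catchesAllWalks hchordal hconn
  exact copNumber_eq_one_of_copsWin hS.copsWin
end

section
/- If G is a finite simple connected graph containing no induced path on t vertices (t ≥ 2), then t − 2 cops have a strategy that captures the robber within t − 1 cop moves (for t ≥ 4; in general, max(1, t−2) cops suffice). -/
open SimpleGraph

variable {V : Type*}

/-!
Let `k + 1` cops all start on a vertex `v₀`. Inductively the cops occupy an induced path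
`v 0, …, v n`, the surplus cops stacked on its head `v n`, and the robber, not dominated, lives
in a component of `G - N[v 0, …, v n]` that contains a neighbour `y` of some `z ∈ N(v n)` lying
outside `N[v 0, …, v (n-1)]`. One stacked cop steps to `z`, which extends the induced path. If the
robber is still not dominated, then on a walk from `y` to the robber outside `N[v 0, …, v n]` the
last vertex in `N[z]` is a new such `z'`. After `k` rounds, `v 0, …, v k, z, y` would be an
induced path on `k + 3` vertices; take `k = t - 3`.
-/

theorem step_iff_mem_closedNbhd {G : SimpleGraph V} {u w : V} :
    Step G u w ↔ w ∈ closedNbhd G u := by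
  rw [Step, closedNbhd, Set.mem_insert_iff, mem_neighborSet, eq_comm]

theorem CapturesWithin.mono {G : SimpleGraph V} {k m m' : ℕ} {S : CopStrategy G k}
    (h : CapturesWithin S m) (hm : m ≤ m') : CapturesWithin S m' := fun R =>
  (h R).imp fun _ ⟨hn, hcap⟩ => ⟨hn.trans hm, hcap⟩

theorem CopStrategy.capturesWithin_of_invariant {G : SimpleGraph V} {k : ℕ}
    (S : CopStrategy G k) (threat : (Fin k → V) → V → Prop) (inv : ℕ → (Fin k → V) → V → Prop)
    (m : ℕ) (hcapture : ∀ c r, threat c r → ∃ i, S.move c r i = r)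
    (hinit : ∀ r, threat S.init r ∨ inv 0 S.init r)
    (hstep : ∀ n < m, ∀ c r r', inv n c r → Step G r r' →
      threat (S.move c r) r' ∨ inv (n + 1) (S.move c r) r')
    (hfinal : ∀ c r, ¬ inv m c r) :
    CapturesWithin S (m + 1) := by
  intro R
  have key : ∀ n ≤ m, (∃ n' ≤ n, threat (play S R n').1 (play S R n').2) ∨
      inv n (play S R n).1 (play S R n).2 := by
    intro n hn
    induction n with
    | zero => exact (hinit _).imp_left fun h => ⟨0, le_rfl, h⟩
    | succ n ih =>
      rcases ih (by omega) with ⟨n', hn', h⟩ | h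
      · exact Or.inl ⟨n', by omega, h⟩
      · exact (hstep n hn _ _ _ h (R.move_valid _ _)).imp_left fun h => ⟨n + 1, le_rfl, h⟩
  obtain ⟨n, hn, h⟩ := (key m le_rfl).resolve_right (hfinal _ _)
  exact ⟨n, by omega, hcapture _ _ h⟩

def ReachableAvoiding (G : SimpleGraph V) (X : Set V) (a b : V) : Prop :=
  a ∉ X ∧ Relation.ReflTransGen (fun x y => G.Adj x y ∧ y ∉ X) a b

namespace ReachableAvoiding

variable {G : SimpleGraph V} {X Y : Set V} {a b b' c : V}

theorem of_reachable (h : G.Reachable a b) : ReachableAvoiding G ∅ a b :=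
  ⟨Set.notMem_empty a,
    Relation.ReflTransGen.mono (fun _ _ hxy => ⟨hxy, Set.notMem_empty _⟩) _ _
      ((reachable_iff_reflTransGen a b).mp h)⟩

theorem notMem_right (h : ReachableAvoiding G X a b) : b ∉ X := by
  obtain ⟨ha, hab⟩ := h
  induction hab with
  | refl => exact ha
  | tail _ hstep => exact hstep.2

theorem step (h : ReachableAvoiding G X a b) (hb : Step G b b') (hb' : b' ∉ X) :
    ReachableAvoiding G X a b' := by
  rcases hb with rfl | hadj
  · exact h
  · exact ⟨h.1, h.2.tail ⟨hadj, hb'⟩⟩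

theorem mono (h : ReachableAvoiding G X a b) (hYX : Y ⊆ X) : ReachableAvoiding G Y a b :=
  ⟨fun ha => h.1 (hYX ha),
    Relation.ReflTransGen.mono (fun _ _ hxy => ⟨hxy.1, fun hy => hxy.2 (hYX hy)⟩) _ _ h.2⟩

/-- `z` is the last vertex of the walk inside `N[c]`; it is not `c` itself because its successor
`y` lies outside `N[c]`. -/
theorem exists_last_exit (h : ReachableAvoiding G X a b) (ha : a ∈ closedNbhd G c)
    (hb : b ∉ closedNbhd G c) :
    ∃ z y, G.Adj c z ∧ z ∉ X ∧ G.Adj z y ∧ ReachableAvoiding G (X ∪ closedNbhd G c) y b := by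
  obtain ⟨haX, hab⟩ := h
  induction hab with
  | refl => exact absurd ha hb
  | @tail b' b hab' hstep ih =>
    have hbXc : b ∉ X ∪ closedNbhd G c := by
      rintro (hbX | hbc)
      exacts [hstep.2 hbX, hb hbc]
    by_cases hb' : b' ∈ closedNbhd G c
    · refine ⟨b', b, ?_, notMem_right ⟨haX, hab'⟩, hstep.1, hbXc, .refl⟩
      rcases hb' with rfl | hcb'
      · exact absurd (Set.mem_insert_of_mem _ hstep.1) hb
      · exact hcb'
    · obtain ⟨z, y, hcz, hzX, hzy, hyb'⟩ := ih hb'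
      exact ⟨z, y, hcz, hzX, hzy, hyb'.step (Or.inr hstep.1) hbXc⟩

end ReachableAvoiding

def IsInducedPathUpTo (G : SimpleGraph V) (v : ℕ → V) (n : ℕ) : Prop :=
  (∀ p < n, G.Adj (v p) (v (p + 1))) ∧ ∀ p q, p + 1 < q → q ≤ n → v q ∉ closedNbhd G (v p)

namespace IsInducedPathUpTo

variable {G : SimpleGraph V} {v : ℕ → V} {n : ℕ}

theorem zero (v : ℕ → V) : IsInducedPathUpTo G v 0 :=
  ⟨fun p hp => absurd hp (Nat.not_lt_zero p), fun p q hpq hq => absurd hpq (by omega)⟩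

theorem ne (hv : IsInducedPathUpTo G v n) {p q : ℕ} (hpq : p < q) (hq : q ≤ n) : v p ≠ v q := by
  rcases Nat.lt_or_ge (p + 1) q with h | h
  · exact fun he => hv.2 p q h hq (he ▸ Set.mem_insert _ _)
  · obtain rfl : q = p + 1 := by omega
    exact (hv.1 p (by omega)).ne

theorem update (hv : IsInducedPathUpTo G v n) {z : V} (hz : G.Adj (v n) z)
    (hz' : ∀ p < n, z ∉ closedNbhd G (v p)) :
    IsInducedPathUpTo G (Function.update v (n + 1) z) (n + 1) := by
  have hlow : ∀ p ≤ n, Function.update v (n + 1) z p = v p := fun p hp =>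
    Function.update_of_ne (by omega) _ _
  refine ⟨fun p hp => ?_, fun p q hpq hq => ?_⟩
  · rw [hlow p (by omega)]
    rcases Nat.lt_or_ge p n with h | h
    · rw [hlow (p + 1) h]
      exact hv.1 p h
    · obtain rfl : p = n := by omega
      rwa [Function.update_self]
  · rw [hlow p (by omega)]
    rcases Nat.lt_or_ge q (n + 1) with h | h
    · rw [hlow q (by omega)]
      exact hv.2 p q hpq (by omega)
    · obtain rfl : q = n + 1 := by omega
      rw [Function.update_self]
      exact hz' p (by omega)

theorem nonempty_embedding (hv : IsInducedPathUpTo G v n) :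
    Nonempty (pathGraph (n + 1) ↪g G) := by
  have hadj : ∀ p q, p < q → q ≤ n → (G.Adj (v p) (v q) ↔ p + 1 = q) := fun p q hpq hq =>
    ⟨fun h => by_contra fun hne => hv.2 p q (by omega) hq (Set.mem_insert_of_mem _ h),
      by rintro rfl; exact hv.1 p (by omega)⟩
  refine ⟨⟨⟨fun i => v i, fun a b hab => ?_⟩, fun {a b} => ?_⟩⟩
  · by_contra hne
    rcases Fin.lt_or_lt_of_ne hne with h | h
    · exact hv.ne h (by omega) hab
    · exact hv.ne h (by omega) hab.symm
  · change G.Adj (v a) (v b) ↔ _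
    rw [pathGraph_adj]
    rcases lt_trichotomy (a : ℕ) b with h | h | h
    · rw [hadj a b h (by omega)]
      omega
    · rw [h]
      simp
    · rw [G.adj_comm, hadj b a h (by omega)]
      omega

end IsInducedPathUpTo

theorem isEmpty_embedding_pathGraph_of_le {G : SimpleGraph V} {m n : ℕ}
    (h : IsEmpty (pathGraph m ↪g G)) (hmn : m ≤ n) : IsEmpty (pathGraph n ↪g G) :=
  ⟨fun e => h.false (e.comp ⟨Fin.castLEEmb hmn, by simp [pathGraph_adj]⟩)⟩

section Chase

variable (G : SimpleGraph V) {k : ℕ}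

def IsChaseVertex (c : Fin (k + 1) → V) (r z : V) : Prop :=
  G.Adj (c (Fin.last k)) z ∧ (∀ i, c i ≠ c (Fin.last k) → z ∉ closedNbhd G (c i)) ∧
    ∃ y, G.Adj z y ∧ ReachableAvoiding G (⋃ i, closedNbhd G (c i)) y r

open Classical in
/-- The head of the path is `c (Fin.last k)`; every cop standing there except the first one
steps to a chase vertex. -/
noncomputable def chaseMove (c : Fin (k + 1) → V) (r : V) : Fin (k + 1) → V :=
  if h : ∃ i, r ∈ closedNbhd G (c i) then Function.update c h.choose r
  else if h : ∃ z, IsChaseVertex G c r z then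
    fun i => if c i = c (Fin.last k) ∧ ∃ j < i, c j = c (Fin.last k) then h.choose else c i
  else c

theorem chaseMove_valid (c : Fin (k + 1) → V) (r : V) (i : Fin (k + 1)) :
    Step G (c i) (chaseMove G c r i) := by
  unfold chaseMove
  split_ifs with hcap hz
  · rcases eq_or_ne i hcap.choose with rfl | hne
    · rw [Function.update_self, step_iff_mem_closedNbhd]
      exact hcap.choose_spec
    · rw [Function.update_of_ne hne]
      exact Or.inl rfl
  · dsimp only
    split_ifs with hi
    · exact Or.inr (hi.1 ▸ hz.choose_spec.1)
    · exact Or.inl rfl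
  · exact Or.inl rfl

theorem chaseMove_capture {c : Fin (k + 1) → V} {r : V} (h : ∃ i, r ∈ closedNbhd G (c i)) :
    ∃ i, chaseMove G c r i = r := by
  unfold chaseMove
  rw [dif_pos h]
  exact ⟨h.choose, Function.update_self _ _ _⟩

noncomputable def chaseStrategy (k : ℕ) (v₀ : V) : CopStrategy G (k + 1) where
  init _ := v₀
  move := chaseMove G
  move_valid := chaseMove_valid G

variable {G}

open Classical in
theorem IsChaseVertex.exists_chaseMove_eq {c : Fin (k + 1) → V} {r z : V}
    (hz : IsChaseVertex G c r z) :
    ∃ z', IsChaseVertex G c r z' ∧ ∀ i, chaseMove G c r i =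
      if c i = c (Fin.last k) ∧ ∃ j < i, c j = c (Fin.last k) then z' else c i := by
  have hcap : ¬ ∃ i, r ∈ closedNbhd G (c i) := fun ⟨i, hi⟩ =>
    hz.2.2.choose_spec.2.notMem_right (Set.mem_iUnion_of_mem i hi)
  have h : ∃ z, IsChaseVertex G c r z := ⟨z, hz⟩
  refine ⟨h.choose, h.choose_spec, fun i => ?_⟩
  unfold chaseMove
  rw [dif_neg hcap, dif_pos h]

theorem IsChaseVertex.exists_next {c c' : Fin (k + 1) → V} {r r' z : V}
    (hz : IsChaseVertex G c r z) (hlast : c' (Fin.last k) = z)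
    (hc'c : ∀ i, c' i ≠ z → ∃ j, c' i = c j) (hcc' : ∀ i, ∃ j, c i = c' j)
    (hr : Step G r r') (hr' : ∀ i, r' ∉ closedNbhd G (c' i)) :
    ∃ z', IsChaseVertex G c' r' z' := by
  obtain ⟨y, hzy, hyr⟩ := hz.2.2
  have hr'X : r' ∉ ⋃ i, closedNbhd G (c i) := by
    simp only [Set.mem_iUnion, not_exists]
    intro i
    obtain ⟨j, hj⟩ := hcc' i
    exact hj ▸ hr' j
  obtain ⟨z', y', hzz', hz'X, hz'y', hy'r'⟩ := (hyr.step hr hr'X).exists_last_exit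
    (Set.mem_insert_of_mem _ hzy) (hlast ▸ hr' (Fin.last k))
  refine ⟨z', hlast ▸ hzz', fun i hi => ?_, y', hz'y', hy'r'.mono fun x hx => ?_⟩
  · obtain ⟨j, hj⟩ := hc'c i (hlast ▸ hi)
    exact hj ▸ fun hmem => hz'X (Set.mem_iUnion_of_mem j hmem)
  · obtain ⟨i, hi⟩ := Set.mem_iUnion.mp hx
    by_cases hiz : c' i = z
    · exact Or.inr (hiz ▸ hi)
    · obtain ⟨j, hj⟩ := hc'c i hiz
      exact Or.inl (Set.mem_iUnion_of_mem j (hj ▸ hi))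

section Layout

variable {n : ℕ} {c : Fin (k + 1) → V} {v : ℕ → V} (hc : ∀ i : Fin (k + 1), c i = v (min i n))
include hc

theorem apply_last_of_layout (hn : n ≤ k) : c (Fin.last k) = v n := by
  rw [hc, Fin.val_last, min_eq_right hn]

theorem apply_of_layout {p : ℕ} (hp : p ≤ n) (hn : n ≤ k) :
    c ⟨p, Nat.lt_succ_of_le (hp.trans hn)⟩ = v p := by
  rw [hc, min_eq_left hp]

theorem stacked_iff_of_layout (hv : IsInducedPathUpTo G v n) (hn : n ≤ k) (i : Fin (k + 1)) :
    (c i = c (Fin.last k) ∧ ∃ j < i, c j = c (Fin.last k)) ↔ n < i := by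
  have hhead : ∀ j : Fin (k + 1), c j = c (Fin.last k) ↔ n ≤ j := by
    intro j
    rw [hc j, apply_last_of_layout hc hn]
    refine ⟨fun h => ?_, fun h => by rw [min_eq_right h]⟩
    by_contra hlt
    exact hv.ne (min_lt_iff.mpr (Or.inl (not_le.mp hlt))) le_rfl h
  simp only [hhead]
  refine ⟨fun ⟨_, j, hji, hj⟩ => lt_of_le_of_lt hj hji, fun h => ⟨h.le, ⟨n, by omega⟩, h, le_rfl⟩⟩

theorem IsChaseVertex.isInducedPathUpTo_update {r z : V} (hz : IsChaseVertex G c r z)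
    (hv : IsInducedPathUpTo G v n) (hn : n ≤ k) :
    IsInducedPathUpTo G (Function.update v (n + 1) z) (n + 1) := by
  refine hv.update (apply_last_of_layout hc hn ▸ hz.1) fun p hp => ?_
  have hcp := apply_of_layout hc hp.le hn
  refine hcp ▸ hz.2.1 _ ?_
  rw [hcp, apply_last_of_layout hc hn]
  exact hv.ne hp le_rfl

end Layout

variable (G)

def ChaseInvariant (n : ℕ) (c : Fin (k + 1) → V) (r : V) : Prop :=
  ∃ v : ℕ → V, (∀ i : Fin (k + 1), c i = v (min i n)) ∧ IsInducedPathUpTo G v n ∧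
    ∃ z, IsChaseVertex G c r z

theorem chaseInvariant_init (hconn : G.Connected) {v₀ r : V} (hr : r ∉ closedNbhd G v₀) :
    ChaseInvariant G 0 (fun _ : Fin (k + 1) => v₀) r := by
  obtain ⟨z, y, hv₀z, -, hzy, hyr⟩ :=
    (ReachableAvoiding.of_reachable (hconn.preconnected v₀ r)).exists_last_exit
      (Set.mem_insert _ _) hr
  refine ⟨fun _ => v₀, fun _ => rfl, IsInducedPathUpTo.zero _, z, hv₀z,
    fun _ hi => absurd rfl hi, y, hzy, hyr.mono ?_⟩
  simp

variable {G}

theorem ChaseInvariant.succ {n : ℕ} {c : Fin (k + 1) → V} {r r' : V} (h : ChaseInvariant G n c r)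
    (hn : n < k) (hr : Step G r r') :
    (∃ i, r' ∈ closedNbhd G (chaseMove G c r i)) ∨ ChaseInvariant G (n + 1) (chaseMove G c r) r' := by
  obtain ⟨v, hc, hv, z₀, hz₀⟩ := h
  obtain ⟨z, hz, hmove⟩ := hz₀.exists_chaseMove_eq
  rw [or_iff_not_imp_left, not_exists]
  intro hr'
  have hc' : ∀ i : Fin (k + 1),
      chaseMove G c r i = Function.update v (n + 1) z (min i (n + 1)) := by
    intro i
    rw [hmove]
    split_ifs with hi <;> rw [stacked_iff_of_layout hc hv hn.le] at hi
    · rw [min_eq_right hi, Function.update_self]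
    · rw [min_eq_left (by omega), Function.update_of_ne (by omega), hc, min_eq_left (by omega)]
  have hlast : chaseMove G c r (Fin.last k) = z := by
    rw [hc', Fin.val_last, min_eq_right (by omega), Function.update_self]
  have hc'c : ∀ i, chaseMove G c r i ≠ z → ∃ j, chaseMove G c r i = c j := by
    intro i hi
    rw [hmove] at hi ⊢
    split_ifs at hi ⊢
    exacts [absurd rfl hi, ⟨i, rfl⟩]
  have hcc' : ∀ i, ∃ j, c i = chaseMove G c r j := fun i =>
    ⟨⟨min i n, by omega⟩, by
      rw [hc', hc]
      simp only
      rw [min_eq_left (by omega : min (i : ℕ) n ≤ n + 1), Function.update_of_ne (by omega)]⟩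
  exact ⟨Function.update v (n + 1) z, hc', hz.isInducedPathUpTo_update hc hv hn.le,
    hz.exists_next hlast hc'c hcc' hr hr'⟩

theorem ChaseInvariant.nonempty_embedding {c : Fin (k + 1) → V} {r : V} (h : ChaseInvariant G k c r) :
    Nonempty (pathGraph (k + 3) ↪g G) := by
  obtain ⟨v, hc, hv, z, hz⟩ := h
  obtain ⟨y, hzy, hyr⟩ := hz.2.2
  refine ((hz.isInducedPathUpTo_update hc hv le_rfl).update (by rwa [Function.update_self])
    fun p hp => ?_).nonempty_embedding
  rw [Function.update_of_ne (by omega), ← apply_of_layout hc (by omega : p ≤ k) le_rfl]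
  exact fun hmem => hyr.1 (Set.mem_iUnion_of_mem _ hmem)

variable (G)

theorem exists_capturesWithin_of_isEmpty_embedding_pathGraph (hconn : G.Connected) (k : ℕ)
    (hfree : IsEmpty (pathGraph (k + 3) ↪g G)) :
    ∃ S : CopStrategy G (k + 1), CapturesWithin S (k + 1) := by
  obtain ⟨v₀⟩ := hconn.nonempty
  refine ⟨chaseStrategy G k v₀, (chaseStrategy G k v₀).capturesWithin_of_invariant
    (fun c r => ∃ i, r ∈ closedNbhd G (c i)) (ChaseInvariant G) k
    (fun _ _ => chaseMove_capture G) (fun r => ?_) (fun n hn _ _ _ h hr => h.succ hn hr)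
    (fun _ _ h => hfree.false h.nonempty_embedding.some)⟩
  by_cases hr : r ∈ closedNbhd G v₀
  · exact Or.inl ⟨0, hr⟩
  · exact Or.inr (chaseInvariant_init G hconn hr)

end Chase

theorem cops_capture_fast_of_pathFree_general (G : SimpleGraph V)
    (hconn : G.Connected) (t : ℕ) (ht : 2 ≤ t)
    (hfree : IsEmpty (pathGraph t ↪g G)) :
    ∃ S : CopStrategy G (max 1 (t - 2)), CapturesWithin S (t - 1) := by
  obtain ⟨S, hS⟩ := exists_capturesWithin_of_isEmpty_embedding_pathGraph G hconn (t - 3)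
    (isEmpty_embedding_pathGraph_of_le hfree (by omega))
  rw [show max 1 (t - 2) = t - 3 + 1 by omega]
  exact ⟨S, hS.mono (by omega)⟩

/-- If `G` is a finite simple connected `P_t`-free graph (`t ≥ 2`), then
`max 1 (t - 2)` cops have a strategy that captures the robber within `t - 1` cop moves. -/
theorem cops_capture_fast_of_pathFree [Fintype V] (G : SimpleGraph V)
    (hconn : G.Connected) (t : ℕ) (ht : 2 ≤ t)
    (hfree : IsEmpty (pathGraph t ↪g G)) :
    ∃ S : CopStrategy G (max 1 (t - 2)), CapturesWithin S (t - 1) :=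
  cops_capture_fast_of_pathFree_general G hconn t ht hfree
end

section
/- Let v_0, v_1, ..., v_m be an induced path in G and C_1 ⊇ C_2 ⊇ ... ⊇ C_m a nested sequence of connected vertex sets such that for each i, C_i is a connected component of G[C_{i−1}] − N[v_{i−1}] (with C_0 = V(G) \ N[v_0] component convention), v_i ∉ C_i, and v_i has a neighbor in C_i. Then every vertex r' ∉ C_m that has a neighbor r ∈ C_m must be adjacent to some vertex v_i of the path. -/
open SimpleGraph

variable {V : Type*}

/-!
Follow `r'` down the chain `C 0 ⊇ C 1 ⊇ ⋯ ⊇ C m`: it lies in `C 0` but not in `C m`, so it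
leaves the chain at some level, `r' ∈ C i \ C (i + 1)`, while `r ∈ C m ⊆ C (i + 1)`. As
`C (i + 1)` is a component of `G[C i] − N[v i]`, its neighbour `r'` in `C i` must lie in
`N[v i]`, and `r' ≠ v i` because `r ∉ N[v i]`.
-/

section

variable {G : SimpleGraph V}

theorem adj_of_adj_of_mem_of_notMem {A B : Set V} {u x y : V}
    (hcomp : ∀ b ∈ B, ∀ a ∈ A, G.Adj b a → a ∈ closedNbhd G u ∨ a ∈ B)
    (hx : x ∈ B) (hxu : x ∉ closedNbhd G u) (hy : y ∈ A) (hyB : y ∉ B) (hyx : G.Adj y x) :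
    G.Adj y u := by
  rcases hcomp x hx y hy hyx.symm with (rfl | hadj) | hyB'
  · exact absurd (Or.inr hyx) hxu
  · exact hadj.symm
  · exact absurd hyB' hyB

theorem exists_lt_adj_of_adj_of_mem_of_notMem {v : ℕ → V} {C : ℕ → Set V} {m : ℕ}
    (hC0 : C 0 = Set.univ)
    (hnested : ∀ i < m, C (i + 1) ⊆ C i)
    (hdisj : ∀ i < m, ∀ x ∈ C (i + 1), x ∉ closedNbhd G (v i))
    (hcomp : ∀ i < m, ∀ x ∈ C (i + 1), ∀ y ∈ C i, G.Adj x y →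
      y ∈ closedNbhd G (v i) ∨ y ∈ C (i + 1))
    {r r' : V} (hr : r ∈ C m) (hr' : r' ∉ C m) (hadj : G.Adj r' r) :
    ∃ i < m, G.Adj r' (v i) := by
  induction m with
  | zero => exact absurd (hC0 ▸ Set.mem_univ r') hr'
  | succ m ih =>
    by_cases hr'm : r' ∈ C m
    · exact ⟨m, m.lt_succ_self, adj_of_adj_of_mem_of_notMem (hcomp m m.lt_succ_self)
        hr (hdisj m m.lt_succ_self r hr) hr'm hr' hadj⟩
    · obtain ⟨i, hi, hi'⟩ := ih (fun i hi => hnested i (by omega))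
        (fun i hi => hdisj i (by omega)) (fun i hi => hcomp i (by omega))
        (hnested m m.lt_succ_self hr) hr'm
      exact ⟨i, by omega, hi'⟩

end

theorem gyarfas_path_attach_general (G : SimpleGraph V) (m : ℕ) (v : ℕ → V) (C : ℕ → Set V)
    (hC0 : C 0 = Set.univ)
    (hnested : ∀ i < m, C (i + 1) ⊆ C i)
    (hdisj : ∀ i < m, ∀ x ∈ C (i + 1), x ∉ closedNbhd G (v i))
    (hcomp : ∀ i < m, ∀ x ∈ C (i + 1), ∀ y ∈ C i, G.Adj x y →
      y ∈ closedNbhd G (v i) ∨ y ∈ C (i + 1))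
    (r r' : V) (hr : r ∈ C m) (hr' : r' ∉ C m) (hadj : G.Adj r' r) :
    ∃ i ≤ m, G.Adj r' (v i) := by
  obtain ⟨i, hi, hadj'⟩ :=
    exists_lt_adj_of_adj_of_mem_of_notMem hC0 hnested hdisj hcomp hr hr' hadj
  exact ⟨i, hi.le, hadj'⟩

/-- Gyárfás path attachment. Given an induced path `v 0, ..., v m` and a
nested sequence of connected sets where `C (i+1)` is a connected component of
`G[C i] − N[v i]` (with `C 0 = V(G)` convention), `v i ∉ C i` and `v i` has a neighbor in
`C i` (for `1 ≤ i ≤ m`), every vertex `r' ∉ C m` with a neighbor `r ∈ C m` is adjacent to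
some vertex `v i` of the path. -/
theorem gyarfas_path_attach (G : SimpleGraph V) (m : ℕ) (v : ℕ → V) (C : ℕ → Set V)
    (hinj : ∀ i ≤ m, ∀ j ≤ m, v i = v j → i = j)
    (hpath : ∀ i ≤ m, ∀ j ≤ m, (G.Adj (v i) (v j) ↔ (i + 1 = j ∨ j + 1 = i)))
    (hC0 : C 0 = Set.univ)
    (hnested : ∀ i < m, C (i + 1) ⊆ C i)
    (hdisj : ∀ i < m, ∀ x ∈ C (i + 1), x ∉ closedNbhd G (v i))
    (hCconn : ∀ i < m, (G.induce (C (i + 1))).Connected)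
    (hcomp : ∀ i < m, ∀ x ∈ C (i + 1), ∀ y ∈ C i, G.Adj x y →
      y ∈ closedNbhd G (v i) ∨ y ∈ C (i + 1))
    (hnotin : ∀ i, 1 ≤ i → i ≤ m → v i ∉ C i)
    (hnbr : ∀ i, 1 ≤ i → i ≤ m → ∃ c ∈ C i, G.Adj (v i) c)
    (r r' : V) (hr : r ∈ C m) (hr' : r' ∉ C m) (hadj : G.Adj r' r) :
    ∃ i ≤ m, G.Adj r' (v i) :=
  gyarfas_path_attach_general G m v C hC0 hnested hdisj hcomp r r' hr hr' hadj
end
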